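/- Let R be a commutative ring equipped with an involutive ring automorphism r ↦ r̄, let n ≥ 1, let a, b ∈ R^n, let λ ∈ R satisfy λ·λ̄ = 1, and let C be any n×n matrix over R satisfying C·(C̄)^T = I_n. Set A = circ_λ(a), B = circ_λ(b), let J be the n×n exchange matrix, and let X be the 2n×2n block matrix X = [[−A^T·C·J, −B̄], [B^T·C·J, −Ā]]. Then X·(X̄)^T = −I_{2n} if and only if A·(Ā)^T + B·(B̄)^T = −I_n. -/
import Mathlib


open Matrix

/-- The λ-circulant matrix generated by `a`. -/
def circ {R : Type*} [CommRing R] (n : ℕ) (l : R) (a : ℕ → R) : Matrix (Fin n) (Fin n) R :=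
  Matrix.of fun i j => if (i : ℕ) ≤ (j : ℕ) then a ((j : ℕ) - i) else l * a (n + j - i)

/-- The n×n exchange matrix. -/
def exch (R : Type*) [CommRing R] (n : ℕ) : Matrix (Fin n) (Fin n) R :=
  Matrix.of fun i j => if (i : ℕ) + (j : ℕ) = n - 1 then 1 else 0

/-- The basic shift matrix. -/
def Tm {R : Type*} [CommRing R] (n : ℕ) (l : R) : Matrix (Fin n) (Fin n) R :=
  Matrix.of fun i j => if (j : ℕ) = (i : ℕ) + 1 then 1 else
    if (i : ℕ) = n - 1 ∧ (j : ℕ) = 0 then l else 0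

lemma Tm_pow {R : Type*} [CommRing R] (n : ℕ) (l : R) (k : ℕ) (hk : k < n) :
    (Tm n l) ^ k = Matrix.of (fun i j : Fin n =>
      if (j : ℕ) = (i : ℕ) + k then 1 else if (j : ℕ) + n = (i : ℕ) + k then l else 0) := by
  induction k with
  | zero =>
    ext i j
    have hi := i.isLt; have hj := j.isLt
    simp only [pow_zero, Matrix.one_apply, Matrix.of_apply, Nat.add_zero]
    by_cases h : i = j
    · subst h; simp
    · rw [if_neg h, if_neg (fun hv => h (Fin.ext hv.symm)), if_neg (by omega)]
  | succ k ih =>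
    have hk' : k < n := by omega
    rw [pow_succ, ih hk']
    ext i j
    rw [Matrix.mul_apply]
    have hi := i.isLt; have hj := j.isLt
    rcases Nat.lt_or_ge ((i:ℕ)+k) n with hc | hc
    · rw [Finset.sum_eq_single (⟨(i:ℕ)+k, hc⟩ : Fin n)]
      · simp only [Matrix.of_apply, Tm, Fin.val_mk]
        split_ifs <;> first | (exfalso; omega) | ring1 | omega
      · intro m _ hm
        have hmne : (m:ℕ) ≠ (i:ℕ)+k := fun h => hm (Fin.ext h)
        have hm' := m.isLt
        simp only [Matrix.of_apply, Tm]
        split_ifs <;> first | (exfalso; omega) | ring1 | omega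
      · intro h; exact absurd (Finset.mem_univ _) h
    · have hc2 : (i:ℕ)+k-n < n := by omega
      rw [Finset.sum_eq_single (⟨(i:ℕ)+k-n, hc2⟩ : Fin n)]
      · simp only [Matrix.of_apply, Tm, Fin.val_mk]
        split_ifs <;> first | (exfalso; omega) | ring1 | omega
      · intro m _ hm
        have hmne : (m:ℕ) ≠ (i:ℕ)+k-n := fun h => hm (Fin.ext h)
        have hm' := m.isLt
        simp only [Matrix.of_apply, Tm]
        split_ifs <;> first | (exfalso; omega) | ring1 | omega
      · intro h; exact absurd (Finset.mem_univ _) h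

lemma circ_eq_sum {R : Type*} [CommRing R] (n : ℕ) (l : R) (a : ℕ → R) :
    circ n l a = ∑ k ∈ Finset.range n, a k • (Tm n l) ^ k := by
  ext i j
  have hi := i.isLt; have hj := j.isLt
  rw [Matrix.sum_apply]
  rw [Finset.sum_congr rfl (fun k hk => by
    rw [Tm_pow n l k (Finset.mem_range.mp hk)]
    rfl : ∀ k ∈ Finset.range n, (a k • Tm n l ^ k) i j
      = a k • (if (j:ℕ) = (i:ℕ)+k then (1:R) else if (j:ℕ)+n = (i:ℕ)+k then l else 0))]
  rw [Finset.sum_eq_single (if (i:ℕ) ≤ (j:ℕ) then (j:ℕ)-(i:ℕ) else n+(j:ℕ)-(i:ℕ))]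
  · simp only [circ, Matrix.of_apply, smul_eq_mul]
    split_ifs <;> first | (exfalso; omega) | ring1 | omega
  · intro k hkmem hk
    have hkn := Finset.mem_range.mp hkmem
    simp only [smul_eq_mul]
    split_ifs at hk ⊢ <;> first | (exfalso; omega) | ring1 | omega
  · intro h
    exfalso; apply h; rw [Finset.mem_range]; split <;> omega

lemma circ_mul_comm {R : Type*} [CommRing R] (n : ℕ) (l : R) (a b : ℕ → R) :
    circ n l a * circ n l b = circ n l b * circ n l a := by
  rw [circ_eq_sum n l a, circ_eq_sum n l b, Finset.sum_mul_sum, Finset.sum_mul_sum,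
    Finset.sum_comm]
  refine Finset.sum_congr rfl fun k _ => Finset.sum_congr rfl fun m _ => ?_
  rw [smul_mul_smul_comm, smul_mul_smul_comm, mul_comm, pow_mul_comm]

lemma circ_map {R : Type*} [CommRing R] (σ : R ≃+* R) (n : ℕ) (l : R) (a : ℕ → R) :
    (circ n l a).map σ = circ n (σ l) (fun k => σ (a k)) := by
  ext i j
  simp only [circ, Matrix.map_apply, Matrix.of_apply, apply_ite σ, _root_.map_mul]

lemma circ_transpose {R : Type*} [CommRing R] (σ : R ≃+* R) (n : ℕ) (l : R) (a : ℕ → R)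
    (hl : l * σ l = 1) :
    (circ n l a)ᵀ = circ n (σ l) (fun k => if k = 0 then a 0 else l * a (n - k)) := by
  ext i j
  have hi := i.isLt; have hj := j.isLt
  simp only [circ, Matrix.transpose_apply, Matrix.of_apply]
  rcases Nat.lt_trichotomy (i : ℕ) (j : ℕ) with h | h | h
  · rw [if_neg (by omega), if_pos (by omega), if_neg (by omega),
      show n + (i:ℕ) - (j:ℕ) = n - ((j:ℕ) - (i:ℕ)) from by omega]
  · rw [if_pos (by omega), if_pos (by omega), if_pos (by omega)]
    congr 1
    omega
  · rw [if_pos (by omega), if_neg (by omega), if_neg (by omega)]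
    have : n - (n + (j:ℕ) - i) = (i:ℕ) - j := by omega
    rw [this, ← mul_assoc, mul_comm (σ l) l, hl, one_mul]

lemma exch_map {R : Type*} [CommRing R] (σ : R ≃+* R) (n : ℕ) :
    (exch R n).map σ = exch R n := by
  ext i j
  simp only [exch, Matrix.map_apply, Matrix.of_apply, apply_ite σ, _root_.map_one, map_zero]

lemma exch_transpose {R : Type*} [CommRing R] (n : ℕ) : (exch R n)ᵀ = exch R n := by
  ext i j
  simp only [exch, Matrix.transpose_apply, Matrix.of_apply, Nat.add_comm]

lemma exch_mul_self {R : Type*} [CommRing R] (n : ℕ) (hn : 1 ≤ n) :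
    exch R n * exch R n = 1 := by
  ext i j
  have hi := i.isLt; have hj := j.isLt
  rw [Matrix.mul_apply, Finset.sum_eq_single (⟨n - 1 - (i:ℕ), by omega⟩ : Fin n)]
  · simp only [exch, Matrix.of_apply, Matrix.one_apply, Fin.val_mk, Fin.ext_iff]
    split_ifs <;> first | (exfalso; omega) | ring1 | omega
  · intro m _ hm
    have hmne : (m : ℕ) ≠ n - 1 - (i:ℕ) := fun h => hm (Fin.ext h)
    have hm' := m.isLt
    simp only [exch, Matrix.of_apply]
    split_ifs <;> first | (exfalso; omega) | ring1 | omega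
  · intro h; exact absurd (Finset.mem_univ _) h

theorem stmt9 {R : Type*} [CommRing R] (σ : R ≃+* R) (hσ : Function.Involutive σ)
    (n : ℕ) (hn : 1 ≤ n) (a b : ℕ → R) (l : R) (hl : l * σ l = 1)
    (C : Matrix (Fin n) (Fin n) R) (hC : C * (C.map σ)ᵀ = 1)
    (A B : Matrix (Fin n) (Fin n) R) (hA : A = circ n l a) (hB : B = circ n l b)
    (J : Matrix (Fin n) (Fin n) R) (hJ : J = exch R n)
    (X : Matrix (Fin n ⊕ Fin n) (Fin n ⊕ Fin n) R)
    (hX : X = Matrix.fromBlocks (-(Aᵀ * C * J)) (-(B.map σ)) (Bᵀ * C * J) (-(A.map σ))) :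
    X * (X.map σ)ᵀ = -1 ↔ A * (A.map σ)ᵀ + B * (B.map σ)ᵀ = -1 := by
  have hσl : σ (σ l) = l := hσ l
  -- map helpers
  have mneg : ∀ (M : Matrix (Fin n) (Fin n) R), (-M).map ⇑σ = -(M.map ⇑σ) := by
    intro M; ext i j; simp [Matrix.map_apply]
  have minv : ∀ (M : Matrix (Fin n) (Fin n) R), (M.map ⇑σ).map ⇑σ = M := by
    intro M; ext i j; simp [Matrix.map_apply, hσ _]
  have mm : ∀ (M N : Matrix (Fin n) (Fin n) R), (M*N).map ⇑σ = M.map ⇑σ * N.map ⇑σ := by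
    intro M N; ext i j
    simp [Matrix.map_apply, Matrix.mul_apply, map_sum, _root_.map_mul]
  -- structure facts
  have hAt : Aᵀ = circ n (σ l) (fun k => if k = 0 then a 0 else l * a (n - k)) := by
    rw [hA]; exact circ_transpose σ n l a hl
  have hBt : Bᵀ = circ n (σ l) (fun k => if k = 0 then b 0 else l * b (n - k)) := by
    rw [hB]; exact circ_transpose σ n l b hl
  have hAm : A.map ⇑σ = circ n (σ l) (fun k => σ (a k)) := by
    rw [hA]; exact circ_map σ n l a
  have hBm : B.map ⇑σ = circ n (σ l) (fun k => σ (b k)) := by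
    rw [hB]; exact circ_map σ n l b
  have hAmt : (A.map ⇑σ)ᵀ
      = circ n l (fun k => σ (if k = 0 then a 0 else l * a (n - k))) := by
    rw [← Matrix.transpose_map, hAt, circ_map σ n (σ l) _, hσl]
  -- commutation facts
  have c1 : Aᵀ * (B.map ⇑σ) = (B.map ⇑σ) * Aᵀ := by
    rw [hAt, hBm]; exact circ_mul_comm n (σ l) _ _
  have c2 : Bᵀ * (A.map ⇑σ) = (A.map ⇑σ) * Bᵀ := by
    rw [hBt, hAm]; exact circ_mul_comm n (σ l) _ _
  have c3 : (A.map ⇑σ) * Aᵀ = Aᵀ * (A.map ⇑σ) := by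
    rw [hAt, hAm]; exact circ_mul_comm n (σ l) _ _
  have c4 : Bᵀ * (B.map ⇑σ) = (B.map ⇑σ) * Bᵀ := by
    rw [hBt, hBm]; exact circ_mul_comm n (σ l) _ _
  have c5 : (A.map ⇑σ)ᵀ * A = A * (A.map ⇑σ)ᵀ := by
    rw [hAmt, hA]; exact circ_mul_comm n l _ _
  -- key cancellation
  have key : ∀ M N : Matrix (Fin n) (Fin n) R,
      (M * C * exch R n) * ((N * C * exch R n).map ⇑σ)ᵀ = M * ((N.map ⇑σ))ᵀ := by
    intro M N
    rw [mm (N * C) (exch R n), mm N C, exch_map σ n, Matrix.transpose_mul,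
      Matrix.transpose_mul, exch_transpose]
    have hJJ : ∀ Y : Matrix (Fin n) (Fin n) R, exch R n * (exch R n * Y) = Y := fun Y => by
      rw [← Matrix.mul_assoc, exch_mul_self n hn, Matrix.one_mul]
    have hCC : ∀ Y : Matrix (Fin n) (Fin n) R, C * ((C.map ⇑σ)ᵀ * Y) = Y := fun Y => by
      rw [← Matrix.mul_assoc, hC, Matrix.one_mul]
    simp only [Matrix.mul_assoc]
    rw [hJJ, hCC]
  set M0 : Matrix (Fin n) (Fin n) R := Aᵀ * (A.map ⇑σ) + (B.map ⇑σ) * Bᵀ with hM0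
  have hprod : X * (X.map ⇑σ)ᵀ = Matrix.fromBlocks M0 0 0 M0 := by
    rw [hX, hJ, Matrix.fromBlocks_map, Matrix.fromBlocks_transpose, Matrix.fromBlocks_multiply]
    have hblocks : ∀ (P Q S T P' Q' S' T' : Matrix (Fin n) (Fin n) R),
        P = P' → Q = Q' → S = S' → T = T' →
        Matrix.fromBlocks P Q S T = Matrix.fromBlocks P' Q' S' T' := by
      intro P Q S T P' Q' S' T' h1 h2 h3 h4
      rw [h1, h2, h3, h4]
    refine hblocks _ _ _ _ _ _ _ _ ?_ ?_ ?_ ?_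
    · simp only [mneg, Matrix.transpose_neg, Matrix.mul_neg, Matrix.neg_mul, neg_neg]
      rw [key, minv, Matrix.transpose_map, Matrix.transpose_transpose]
    · simp only [mneg, Matrix.transpose_neg, Matrix.mul_neg, Matrix.neg_mul, neg_neg]
      rw [key, minv, Matrix.transpose_map, Matrix.transpose_transpose, c1]
      exact neg_add_cancel _
    · simp only [mneg, Matrix.transpose_neg, Matrix.mul_neg, Matrix.neg_mul, neg_neg]
      rw [key, minv, Matrix.transpose_map, Matrix.transpose_transpose, c2]
      exact neg_add_cancel _
    · simp only [mneg, Matrix.transpose_neg, Matrix.mul_neg, Matrix.neg_mul, neg_neg]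
      rw [key, minv, Matrix.transpose_map, Matrix.transpose_transpose, c4, c3]
      exact add_comm _ _
  have hone : (-1 : Matrix (Fin n ⊕ Fin n) (Fin n ⊕ Fin n) R)
      = Matrix.fromBlocks (-1) 0 0 (-1) := by
    calc (-1 : Matrix (Fin n ⊕ Fin n) (Fin n ⊕ Fin n) R)
        = -(Matrix.fromBlocks 1 0 0 1) := by rw [Matrix.fromBlocks_one]
      _ = Matrix.fromBlocks (-1) (-0) (-0) (-1) := Matrix.fromBlocks_neg _ _ _ _
      _ = Matrix.fromBlocks (-1) 0 0 (-1) := by rw [neg_zero]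
  have hMt : M0ᵀ = A * (A.map ⇑σ)ᵀ + B * (B.map ⇑σ)ᵀ := by
    rw [hM0, Matrix.transpose_add, Matrix.transpose_mul, Matrix.transpose_mul,
      Matrix.transpose_transpose, Matrix.transpose_transpose, c5]
  rw [hprod]
  constructor
  · intro h
    have h11 : M0 = -1 := by
      have h2 := congrArg Matrix.toBlocks₁₁ (h.trans hone)
      simpa [Matrix.toBlocks_fromBlocks₁₁] using h2
    calc A * (A.map ⇑σ)ᵀ + B * (B.map ⇑σ)ᵀ = M0ᵀ := hMt.symm
      _ = (-1 : Matrix (Fin n) (Fin n) R)ᵀ := by rw [h11]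
      _ = -1 := by rw [Matrix.transpose_neg, Matrix.transpose_one]
  · intro h
    have hM0e : M0 = -1 := by
      have ht : M0ᵀ = -1 := by rw [hMt, h]
      calc M0 = M0ᵀᵀ := (Matrix.transpose_transpose M0).symm
        _ = (-1 : Matrix (Fin n) (Fin n) R)ᵀ := by rw [ht]
        _ = -1 := by rw [Matrix.transpose_neg, Matrix.transpose_one]
    rw [hM0e]
    exact hone.symm
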